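/- Characterization of the ℤ₂-even bond algebra on a circle of L qubits: the set {O ∈ Mat : O U = U O}, where U = Z₁ Z₂ ⋯ Z_L is the global spin-flip operator, equals the unital subalgebra of Mat generated by the single-site operators {Z_e : e ∈ ℤ/L} together with the nearest-neighbor operators {X_e X_{e+1} : e ∈ ℤ/L} (indices taken mod L). -/

import Mathlib

noncomputable section

/-- The Pauli `X` matrix. -/
def PauliX : Matrix (Fin 2) (Fin 2) ℂ := !![0, 1; 1, 0]

/-- The Pauli `Z` matrix. -/
def PauliZ : Matrix (Fin 2) (Fin 2) ℂ := !![1, 0; 0, -1]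

/-- `Mat L` is the algebra of `2^L × 2^L` complex matrices, realized as matrices indexed
by `Fin L → Fin 2` (the `L`-fold Kronecker product of `2 × 2` matrix algebras). -/
abbrev Mat (L : ℕ) := Matrix (Fin L → Fin 2) (Fin L → Fin 2) ℂ

/-- The `L`-fold Kronecker product of an `L`-tuple of `2 × 2` matrices. -/
def kron {L : ℕ} (A : Fin L → Matrix (Fin 2) (Fin 2) ℂ) : Mat L :=
  Matrix.of fun i j => ∏ k, A k (i k) (j k)

/-- The single-site operator acting as `P` on the `e`-th tensor factor and as the
identity on all others. -/
def siteOp (L : ℕ) (P : Matrix (Fin 2) (Fin 2) ℂ) (e : Fin L) : Mat L :=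
  kron fun m => if m = e then P else 1

end

/-!
In the computational basis `U` is diagonal with eigenvalue `parity i = (-1)^{|i|}` at `i`, so an
operator commutes with `U` exactly when its entries `O i j` vanish unless `parity i = parity j`.
Such a matrix unit `E_ij` factors as `⊗ₖ E_{iₖ iₖ}` times the product of the `X_k` over the sites
where `i` and `j` differ, and there are evenly many of those. The projectors `E_{aa} = (1 ± Z)/2`
lie in the bond algebra, and so does every `X₀ X_a`, by telescoping bonds `X_e X_{e+1}`; pairing
each `X_k` with a copy of `X₀` then produces the even `X`-strings, since `X₀² = 1`. Conversely `Z_e`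
commutes with `U` and `X_e` anticommutes with it, so every bond `X_e X_{e+1}` commutes with `U`.
-/

open Matrix Finset

local notation "M₂" => Matrix (Fin 2) (Fin 2) ℂ

lemma pauliX_mul_pauliZ : PauliX * PauliZ = -(PauliZ * PauliX) := by
  ext a b
  fin_cases a <;> fin_cases b <;> simp [PauliX, PauliZ]

lemma pauliX_mul_self : PauliX * PauliX = 1 := by
  simp [PauliX, one_fin_two]

lemma pauliZ_eq_diagonal : PauliZ = diagonal fun a : Fin 2 => (-1 : ℂ) ^ (a : ℕ) := by
  ext a b
  fin_cases a <;> fin_cases b <;> simp [PauliZ]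

lemma single_self_eq_smul_pauliZ (a : Fin 2) :
    single a a (1 : ℂ) = (2⁻¹ : ℂ) • (1 + (-1 : ℂ) ^ (a : ℕ) • PauliZ) := by
  fin_cases a <;> ext x y <;> fin_cases x <;> fin_cases y <;> norm_num [PauliZ, single_apply]

lemma single_eq_single_self_mul_ite_pauliX (a b : Fin 2) :
    single a b (1 : ℂ) = single a a 1 * if a ≠ b then PauliX else 1 := by
  fin_cases a <;> fin_cases b <;> ext x y <;> fin_cases x <;> fin_cases y <;>
    simp [PauliX, mul_apply, single_apply]

section Kron

variable {L : ℕ}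

lemma kron_mul (A B : Fin L → M₂) : kron A * kron B = kron (A * B) := by
  ext i j
  simp only [kron, mul_apply, of_apply, Pi.mul_apply, ← prod_mul_distrib]
  rw [prod_univ_sum, Fintype.piFinset_univ]

lemma kron_one : kron (1 : Fin L → M₂) = 1 := by
  ext i j
  simp only [kron, of_apply, Pi.one_apply, one_apply, Fintype.prod_ite_zero, prod_const_one,
    funext_iff]

lemma kron_smul (c : Fin L → ℂ) (A : Fin L → M₂) :
    kron (c • A) = (∏ k, c k) • kron A := by
  ext i j
  simp [kron, prod_mul_distrib]

lemma kron_diagonal (d : Fin L → Fin 2 → ℂ) :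
    kron (fun k => diagonal (d k)) = diagonal fun i => ∏ k, d k (i k) := by
  ext i j
  simp only [kron, of_apply, diagonal_apply, Fintype.prod_ite_zero, funext_iff]
  congr

lemma single_eq_kron (i j : Fin L → Fin 2) :
    single i j (1 : ℂ) = kron fun k => single (i k) (j k) 1 := by
  ext x y
  simp only [kron, of_apply, single_apply, Fintype.prod_ite_zero, prod_const_one, funext_iff,
    forall_and]

lemma commute_kron {A B : Fin L → M₂} (h : ∀ k, Commute (A k) (B k)) :
    Commute (kron A) (kron B) := by
  rw [Commute, SemiconjBy, kron_mul, kron_mul]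
  exact congrArg kron (funext h)

lemma kron_piecewise_insert (A : Fin L → M₂) {s : Finset (Fin L)}
    {a : Fin L} (ha : a ∉ s) :
    kron ((insert a s).piecewise A 1) = siteOp L (A a) a * kron (s.piecewise A 1) := by
  rw [siteOp, kron_mul]
  congr 1
  ext1 k
  by_cases hk : k = a
  · subst hk; simp [ha]
  · simp [hk, piecewise]

lemma kron_mem_of_forall_siteOp_mem (S : Submonoid (Mat L)) {A : Fin L → M₂}
    (hA : ∀ k, siteOp L (A k) k ∈ S) : kron A ∈ S := by
  suffices ∀ s : Finset (Fin L), kron (s.piecewise A 1) ∈ S by simpa using this univ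
  intro s
  induction s using Finset.induction with
  | empty => simp [kron_one, S.one_mem]
  | insert a s ha ih => rw [kron_piecewise_insert A ha]; exact S.mul_mem (hA a) ih

lemma siteOp_apply (P : M₂) (e : Fin L) (i j : Fin L → Fin 2) :
    siteOp L P e i j = P (i e) (j e) * ∏ m ∈ univ.erase e, (1 : M₂) (i m) (j m) := by
  rw [siteOp, kron, of_apply, ← mul_prod_erase univ _ (mem_univ e), if_pos rfl]
  congr 1
  exact prod_congr rfl fun m hm => by rw [if_neg (ne_of_mem_erase hm)]

lemma siteOp_add (P Q : M₂) (e : Fin L) :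
    siteOp L (P + Q) e = siteOp L P e + siteOp L Q e := by
  ext i j
  simp [siteOp_apply, add_mul]

lemma siteOp_smul (c : ℂ) (P : M₂) (e : Fin L) :
    siteOp L (c • P) e = c • siteOp L P e := by
  ext i j
  simp [siteOp_apply, mul_assoc]

lemma siteOp_one (e : Fin L) : siteOp L 1 e = 1 := by
  simp only [siteOp, ite_self]
  exact kron_one

lemma siteOp_mul (P Q : M₂) (e : Fin L) :
    siteOp L P e * siteOp L Q e = siteOp L (P * Q) e := by
  rw [siteOp, siteOp, siteOp, kron_mul]
  congr 1
  ext1 m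
  by_cases h : m = e <;> simp [h]

lemma commute_siteOp_siteOp (P : M₂) (e f : Fin L) :
    Commute (siteOp L P e) (siteOp L P f) :=
  commute_kron fun m => by split_ifs <;> simp [Commute.refl]

lemma siteOp_mul_kron_const_of_anticommute {P Q : M₂}
    (h : P * Q = -(Q * P)) (e : Fin L) :
    siteOp L P e * kron (fun _ => Q) = -(kron (fun _ => Q) * siteOp L P e) := by
  have hsign : (fun m => if m = e then P else 1) * (fun _ => Q) =
      (fun m => if m = e then (-1 : ℂ) else 1) •
        ((fun _ => Q) * fun m => if m = e then P else 1) := by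
    ext1 m
    by_cases hm : m = e <;> simp [hm, h]
  rw [siteOp, kron_mul, kron_mul, hsign, kron_smul, prod_ite_eq', if_pos (mem_univ e), neg_one_smul]

def parity (i : Fin L → Fin 2) : ℂ := ∏ k, (-1) ^ (i k : ℕ)

lemma kron_pauliZ : kron (fun _ : Fin L => PauliZ) = diagonal parity := by
  rw [pauliZ_eq_diagonal, kron_diagonal]
  rfl

lemma parity_mul_parity (i j : Fin L → Fin 2) :
    parity i * parity j = (-1) ^ #{k | i k ≠ j k} := by
  have hsign (a b : Fin 2) :
      (-1 : ℂ) ^ (a : ℕ) * (-1) ^ (b : ℕ) = if a ≠ b then -1 else 1 := by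
    fin_cases a <;> fin_cases b <;> norm_num
  simp only [parity, ← prod_mul_distrib, hsign]
  rw [prod_ite, prod_const, prod_const, one_pow, mul_one]

lemma even_card_ne_of_parity_eq {i j : Fin L → Fin 2} (h : parity i = parity j) :
    Even #{k | i k ≠ j k} := by
  have hpow : (-1 : ℂ) ^ #{k | i k ≠ j k} = 1 := by
    rw [← parity_mul_parity, h, parity_mul_parity]
    simp
  exact (neg_one_pow_eq_one_iff_even (by norm_num)).mp hpow

end Kron

lemma Matrix.apply_eq_zero_of_mul_diagonal_eq {n R : Type*} [Fintype n] [DecidableEq n]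
    [CommRing R] [NoZeroDivisors R] {O : Matrix n n R} {d : n → R}
    (h : O * diagonal d = diagonal d * O) {i j : n} (hij : d i ≠ d j) : O i j = 0 := by
  have hij' : O i j * d j = d i * O i j := by
    simpa only [mul_diagonal, diagonal_mul] using congrFun (congrFun h i) j
  have hzero : O i j * (d j - d i) = 0 := by rw [mul_sub, hij', mul_comm, sub_self]
  exact (mul_eq_zero.mp hzero).resolve_right (sub_ne_zero.mpr hij.symm)

section BondAlgebra

open Fin.NatCast

variable {L : ℕ} [NeZero L]

variable (L) in
def bondAlgebra : Subalgebra ℂ (Mat L) :=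
  Algebra.adjoin ℂ ({x : Mat L | ∃ e : Fin L, x = siteOp L PauliZ e} ∪
    {x : Mat L | ∃ e : Fin L, x = siteOp L PauliX e * siteOp L PauliX (e + 1)})

lemma siteOp_pauliZ_mem_bondAlgebra (e : Fin L) : siteOp L PauliZ e ∈ bondAlgebra L :=
  Algebra.subset_adjoin (Or.inl ⟨e, rfl⟩)

lemma siteOp_pauliX_mul_succ_mem_bondAlgebra (e : Fin L) :
    siteOp L PauliX e * siteOp L PauliX (e + 1) ∈ bondAlgebra L :=
  Algebra.subset_adjoin (Or.inr ⟨e, rfl⟩)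

lemma siteOp_single_self_mem_bondAlgebra (a : Fin 2) (e : Fin L) :
    siteOp L (single a a 1) e ∈ bondAlgebra L := by
  rw [single_self_eq_smul_pauliZ, siteOp_smul, siteOp_add, siteOp_one, siteOp_smul]
  exact Subalgebra.smul_mem _
    (add_mem (one_mem _) (Subalgebra.smul_mem _ (siteOp_pauliZ_mem_bondAlgebra e) _)) _

lemma siteOp_pauliX_zero_mul_mem_bondAlgebra (a : Fin L) :
    siteOp L PauliX 0 * siteOp L PauliX a ∈ bondAlgebra L := by
  suffices ∀ n : ℕ, siteOp L PauliX 0 * siteOp L PauliX (n : Fin L) ∈ bondAlgebra L by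
    simpa using this a
  intro n
  induction n with
  | zero => simp [siteOp_mul, pauliX_mul_self, siteOp_one, one_mem]
  | succ n ih =>
    have htelescope : siteOp L PauliX 0 * siteOp L PauliX ((n : Fin L) + 1) =
        siteOp L PauliX 0 * siteOp L PauliX (n : Fin L) *
          (siteOp L PauliX (n : Fin L) * siteOp L PauliX ((n : Fin L) + 1)) := by
      rw [mul_assoc, ← mul_assoc (siteOp L PauliX (n : Fin L)), siteOp_mul, pauliX_mul_self,
        siteOp_one, one_mul]
    rw [Nat.cast_succ, htelescope]
    exact mul_mem ih (siteOp_pauliX_mul_succ_mem_bondAlgebra _)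

lemma siteOp_pauliX_zero_pow_card_mul_mem_bondAlgebra (s : Finset (Fin L)) :
    siteOp L PauliX 0 ^ #s * kron (s.piecewise (fun _ => PauliX) 1) ∈ bondAlgebra L := by
  induction s using Finset.induction with
  | empty => simp [kron_one, one_mem]
  | insert a s ha ih =>
    have hcomm : Commute (siteOp L PauliX 0 ^ #s) (siteOp L PauliX a) :=
      (commute_siteOp_siteOp _ 0 a).pow_left _
    rw [card_insert_of_notMem ha, kron_piecewise_insert _ ha, pow_succ', mul_assoc,
      ← mul_assoc _ (siteOp L PauliX a), hcomm.eq, mul_assoc, ← mul_assoc]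
    exact mul_mem (siteOp_pauliX_zero_mul_mem_bondAlgebra a) ih

lemma kron_piecewise_pauliX_mem_bondAlgebra {s : Finset (Fin L)} (hs : Even #s) :
    kron (s.piecewise (fun _ => PauliX) 1) ∈ bondAlgebra L := by
  obtain ⟨m, hm⟩ := hs
  have hpow : siteOp L PauliX 0 ^ #s = 1 := by
    rw [hm, ← two_mul, pow_mul, sq, siteOp_mul, pauliX_mul_self, siteOp_one, one_pow]
  simpa [hpow] using siteOp_pauliX_zero_pow_card_mul_mem_bondAlgebra s

lemma single_mem_bondAlgebra_of_parity_eq {i j : Fin L → Fin 2} (h : parity i = parity j) :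
    single i j 1 ∈ bondAlgebra L := by
  have hfactor : kron (fun k => single (i k) (j k) (1 : ℂ)) =
      kron (fun k => single (i k) (i k) 1) *
        kron (({k | i k ≠ j k} : Finset (Fin L)).piecewise (fun _ => PauliX) 1) := by
    rw [kron_mul]
    congr 1
    ext1 k
    simp only [Pi.mul_apply, piecewise, mem_filter, mem_univ, true_and]
    exact single_eq_single_self_mul_ite_pauliX _ _
  rw [single_eq_kron, hfactor]
  exact mul_mem
    (kron_mem_of_forall_siteOp_mem (bondAlgebra L).toSubmonoid
      fun k => siteOp_single_self_mem_bondAlgebra _ k)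
    (kron_piecewise_pauliX_mem_bondAlgebra (even_card_ne_of_parity_eq h))

lemma mem_bondAlgebra_of_commute {O : Mat L}
    (hO : O * kron (fun _ => PauliZ) = kron (fun _ => PauliZ) * O) : O ∈ bondAlgebra L := by
  rw [kron_pauliZ] at hO
  rw [matrix_eq_sum_single O]
  refine sum_mem fun i _ => sum_mem fun j _ => ?_
  by_cases h : parity i = parity j
  · rw [← mul_one (O i j), ← smul_eq_mul, ← smul_single]
    exact Subalgebra.smul_mem _ (single_mem_bondAlgebra_of_parity_eq h) _
  · rw [apply_eq_zero_of_mul_diagonal_eq hO h, single_zero]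
    exact zero_mem _

lemma bondAlgebra_le_centralizer :
    bondAlgebra L ≤ Subalgebra.centralizer ℂ {kron fun _ => PauliZ} := by
  refine Algebra.adjoin_le ?_
  rintro _ (⟨e, rfl⟩ | ⟨e, rfl⟩) _ rfl
  · exact (commute_kron fun _ => by split_ifs <;> simp [Commute.refl]).eq
  · have hX := siteOp_mul_kron_const_of_anticommute pauliX_mul_pauliZ (L := L)
    refine Eq.symm ?_
    rw [mul_assoc, hX, mul_neg, ← mul_assoc (siteOp L PauliX e), hX, neg_mul, neg_neg, mul_assoc]

end BondAlgebra

/-- Characterization of the `ℤ₂`-even bond algebra on a circle of `L`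
qubits: the set of operators commuting with the global spin flip `U = Z^{⊗L}` equals
the unital subalgebra generated by the single-site operators `Z_e` together with the
nearest-neighbor operators `X_e X_{e+1}` (indices mod `L`). -/
theorem bond_algebra_characterization (L : ℕ) [NeZero L] :
    {O : Mat L | O * kron (fun _ => PauliZ) = kron (fun _ => PauliZ) * O} =
      (Algebra.adjoin ℂ
        ({x : Mat L | ∃ e : Fin L, x = siteOp L PauliZ e} ∪
          {x : Mat L | ∃ e : Fin L, x = siteOp L PauliX e * siteOp L PauliX (e + 1)}) :
        Set (Mat L)) :=
  Set.Subset.antisymm (fun _ hO => mem_bondAlgebra_of_commute hO) fun _ hO =>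
    ((Subalgebra.mem_centralizer_iff ℂ).mp (bondAlgebra_le_centralizer hO) _ rfl).symm
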